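/- arXiv:2504.17756 — 9 statements merged into one kernel-verified Lean document; each statement's English description precedes it below -/
import Mathlib

section
/- Let N ≥ 1 and let M be a symmetric N×N real matrix all of whose entries are integers, with |M_{ij}| ≤ B for all i, j, where B ≥ 1 is an integer. Then every nonzero real eigenvalue μ of M (i.e., M v = μ v for some nonzero vector v and μ ≠ 0) satisfies |μ| ≥ (B·N)^{−N}. -/
/-!
The characteristic polynomial of `M` is `X ^ m * q` with `q ∈ ℤ[X]` monic and `q(0) ≠ 0`, and the
nonzero eigenvalue `μ` is a root of `q`. Over `ℂ`, `|q(0)|` is the product of the absolute values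
of the roots of `q`; it is a nonzero integer, hence at least `1`. Every root is an eigenvalue of
`M`, so by Gershgorin it is at most `B N` in absolute value. Hence
`1 ≤ |μ| (B N) ^ (deg q - 1) ≤ |μ| (B N) ^ N`.
-/

open Polynomial

theorem Matrix.norm_le_card_mul_of_isRoot_charpoly {K n : Type*} [NormedField K] [Fintype n]
    [DecidableEq n] {A : Matrix n n K} {B : ℝ} (hA : ∀ i j, ‖A i j‖ ≤ B) {μ : K}
    (hμ : A.charpoly.IsRoot μ) : ‖μ‖ ≤ Fintype.card n * B := by
  rw [← Matrix.charpoly_toLin', ← Module.End.hasEigenvalue_iff_isRoot_charpoly] at hμ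
  obtain ⟨k, hk⟩ := eigenvalue_mem_ball hμ
  rw [Metric.mem_closedBall, dist_eq_norm] at hk
  calc ‖μ‖ ≤ ‖A k k‖ + ‖μ - A k k‖ := norm_le_norm_add_norm_sub' μ (A k k)
    _ ≤ ‖A k k‖ + ∑ j ∈ Finset.univ.erase k, ‖A k j‖ := by gcongr
    _ = ∑ j, ‖A k j‖ := Finset.add_sum_erase _ (fun j => ‖A k j‖) (Finset.mem_univ k)
    _ ≤ ∑ _j : n, B := Finset.sum_le_sum fun j _ => hA k j
    _ = Fintype.card n * B := by simp

theorem Matrix.norm_le_card_mul_of_aeval_charpoly_eq_zero {n : Type*} [Fintype n]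
    [DecidableEq n] {A : Matrix n n ℤ} {B : ℤ} (hA : ∀ i j, |A i j| ≤ B) {z : ℂ}
    (hz : aeval z A.charpoly = 0) : ‖z‖ ≤ Fintype.card n * B := by
  refine (A.map (algebraMap ℤ ℂ)).norm_le_card_mul_of_isRoot_charpoly (fun i j => ?_) ?_
  · simpa [Complex.norm_intCast] using (Int.cast_le (R := ℝ)).mpr (hA i j)
  · rwa [Matrix.charpoly_map, IsRoot, eval_map, ← aeval_def]

theorem Matrix.aeval_charpoly_eq_zero_of_mulVec_eq_smul {R K n : Type*} [CommRing R] [Field K]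
    [Algebra R K] [Fintype n] [DecidableEq n] (A : Matrix n n R) {μ : K} {v : n → K}
    (hv : v ≠ 0) (hAv : (A.map (algebraMap R K)).mulVec v = μ • v) : aeval μ A.charpoly = 0 := by
  have : Module.End.HasEigenvalue (Matrix.toLin' (A.map (algebraMap R K))) μ :=
    Module.End.hasEigenvalue_of_hasEigenvector
      ⟨Module.End.mem_eigenspace_iff.mpr (by rwa [Matrix.toLin'_apply]), hv⟩
  rwa [Module.End.hasEigenvalue_iff_isRoot_charpoly, Matrix.charpoly_toLin', Matrix.charpoly_map,
    IsRoot, eval_map, ← aeval_def] at this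

theorem Polynomial.Monic.exists_eq_X_pow_mul {R : Type*} [CommRing R] [Nontrivial R] {p : R[X]} (hp : p.Monic) :
    ∃ m q, p = X ^ m * q ∧ q.Monic ∧ q.coeff 0 ≠ 0 := by
  obtain ⟨q, hpq, hq0⟩ := p.exists_eq_pow_rootMultiplicity_mul_and_not_dvd hp.ne_zero 0
  rw [C_0, sub_zero] at hpq hq0
  exact ⟨_, q, hpq, (monic_X_pow _).of_mul_monic_left (hpq ▸ hp), X_dvd_iff.not.mp hq0⟩

theorem Polynomial.one_le_norm_mul_pow_of_mem_aroots {q : ℤ[X]} (hq : q.Monic)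
    (h0 : q.coeff 0 ≠ 0) {R : ℝ} (hR : ∀ w ∈ q.aroots ℂ, ‖w‖ ≤ R) {z : ℂ}
    (hz : z ∈ q.aroots ℂ) : 1 ≤ ‖z‖ * R ^ (q.natDegree - 1) := by
  set Q := q.map (algebraMap ℤ ℂ)
  have hQ : Q.natDegree = q.natDegree :=
    natDegree_map_eq_of_injective (RingHom.injective_int _) q
  have hcoeff : (q.coeff 0 : ℂ) = (-1) ^ Q.natDegree * Q.roots.prod := by
    rw [← (IsAlgClosed.splits Q).coeff_zero_eq_prod_roots_of_monic (hq.map _), coeff_map]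
    rfl
  have hcard : (Q.roots.erase z).card = q.natDegree - 1 := by
    rw [Multiset.card_erase_of_mem hz, IsAlgClosed.card_roots_eq_natDegree, hQ,
      Nat.pred_eq_sub_one]
  calc (1 : ℝ) ≤ ‖(q.coeff 0 : ℂ)‖ := by
        rw [Complex.norm_intCast]; exact_mod_cast Int.one_le_abs h0
    _ = (Q.roots.map normHom).prod := by
        rw [hcoeff, norm_mul, norm_pow, norm_neg, norm_one, one_pow, one_mul,
          ← map_multiset_prod]
        rfl
    _ = ‖z‖ * ((Q.roots.erase z).map normHom).prod := (Multiset.prod_map_erase hz).symm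
    _ ≤ ‖z‖ * R ^ (q.natDegree - 1) := by
        rw [← hcard]
        gcongr
        exact Multiset.prod_map_le_pow_card (fun w _ => norm_nonneg w)
          (fun w hw => hR w (Multiset.mem_of_mem_erase hw))

theorem statement1_general (N : ℕ) (hN : 1 ≤ N) (B : ℤ) (hB : 1 ≤ B)
    (M : Matrix (Fin N) (Fin N) ℝ)
    (hint : ∀ i j, ∃ z : ℤ, M i j = (z : ℝ))
    (hbnd : ∀ i j, |M i j| ≤ (B : ℝ))
    (μ : ℝ) (v : Fin N → ℝ) (hv : v ≠ 0)
    (heig : M.mulVec v = μ • v) (hμ : μ ≠ 0) :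
    (((B : ℝ) * (N : ℝ)) ^ N)⁻¹ ≤ |μ| := by
  obtain ⟨A, rfl⟩ : ∃ A : Matrix (Fin N) (Fin N) ℤ, A.map (algebraMap ℤ ℝ) = M := by
    choose A hA using hint
    exact ⟨A, Matrix.ext fun i j => (hA i j).symm⟩
  have hAB : ∀ i j, |A i j| ≤ B := fun i j => by
    exact_mod_cast (by simpa using hbnd i j : |(A i j : ℝ)| ≤ B)
  obtain ⟨m, q, hpq, hq, hq0⟩ := A.charpoly_monic.exists_eq_X_pow_mul
  have hqN : q.natDegree ≤ N := by
    simpa [A.charpoly_natDegree_eq_dim] using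
      natDegree_le_of_dvd (Dvd.intro_left _ hpq.symm) A.charpoly_monic.ne_zero
  have hroots : ∀ w ∈ q.aroots ℂ, ‖w‖ ≤ B * N := fun w hw => by
    have hpw : aeval w A.charpoly = 0 := by rw [hpq, map_mul, (mem_aroots.mp hw).2, mul_zero]
    simpa [mul_comm] using A.norm_le_card_mul_of_aeval_charpoly_eq_zero hAB hpw
  have hμq : (μ : ℂ) ∈ q.aroots ℂ := by
    have hμp := A.aeval_charpoly_eq_zero_of_mulVec_eq_smul hv heig
    rw [hpq, map_mul, map_pow, aeval_X] at hμp
    have hμq : aeval μ q = 0 := (mul_eq_zero.mp hμp).resolve_left (pow_ne_zero _ hμ)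
    refine mem_aroots.mpr ⟨hq.ne_zero, ?_⟩
    simpa [hμq] using aeval_algebraMap_apply ℂ μ q
  have hBN : (1 : ℝ) ≤ B * N :=
    one_le_mul_of_one_le_of_one_le (by exact_mod_cast hB) (by exact_mod_cast hN)
  have key := one_le_norm_mul_pow_of_mem_aroots hq hq0 hroots hμq
  rw [Complex.norm_real, Real.norm_eq_abs] at key
  rw [inv_le_iff_one_le_mul₀ (by positivity)]
  calc (1 : ℝ) ≤ |μ| * (B * N) ^ (q.natDegree - 1) := key
    _ ≤ |μ| * (B * N) ^ N := by gcongr; omega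

theorem statement1 (N : ℕ) (hN : 1 ≤ N) (B : ℤ) (hB : 1 ≤ B)
    (M : Matrix (Fin N) (Fin N) ℝ) (hsym : M.IsSymm)
    (hint : ∀ i j, ∃ z : ℤ, M i j = (z : ℝ))
    (hbnd : ∀ i j, |M i j| ≤ (B : ℝ))
    (μ : ℝ) (v : Fin N → ℝ) (hv : v ≠ 0)
    (heig : M.mulVec v = μ • v) (hμ : μ ≠ 0) :
    (((B : ℝ) * (N : ℝ)) ^ N)⁻¹ ≤ |μ| :=
  statement1_general N hN B hB M hint hbnd μ v hv heig hμ
end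

section
/- Let S ⊆ ℝⁿ be nonempty and finite, d ∈ ℕ, and δ > 0. Assume that every nonzero eigenvalue of the moment matrix M_{S,d} is at least δ. Let r ∈ ℝ[x₁,…,xₙ] be of the form r = ∑_{i=1}^{t₀} q_i² + p₀, where each q_i has total degree at most d and p₀ has total degree at most 2d and vanishes at every point of S. Then there exist polynomials s₁,…,s_t of total degree at most d and a polynomial p of total degree at most 2d vanishing at every point of S such that r = ∑_{i=1}^{t} s_i² + p and ∑_{i=1}^{t} ‖s_i‖² ≤ (1/δ)·(1/|S|)·∑_{α∈S} r(α), where ‖s‖² denotes the sum of the squares of the coefficients of s in the monomial basis. -/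
open Finset

/-- Exponent vectors of total degree at most `d` (each component is at most `d`,
so we encode components in `Fin (d+1)`). -/
abbrev ExpIdx (n d : ℕ) := {σ : Fin n → Fin (d + 1) // ∑ i, (σ i : ℕ) ≤ d}

/-- The moment matrix `M_{S,d}` of a finite set `S ⊆ ℝⁿ` up to degree `d`. -/
noncomputable def momentMatrix (n d : ℕ) (S : Finset (Fin n → ℝ)) :
    Matrix (ExpIdx n d) (ExpIdx n d) ℝ :=
  Matrix.of fun σ τ =>
    (S.card : ℝ)⁻¹ * ∑ α ∈ S, ∏ i, (α i) ^ ((σ.1 i : ℕ) + (τ.1 i : ℕ))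

/-- The sum of the squares of the coefficients of a polynomial in the monomial basis. -/
noncomputable def coeffNormSq {n : ℕ} (s : MvPolynomial (Fin n) ℝ) : ℝ :=
  ∑ m ∈ s.support, (MvPolynomial.coeff m s) ^ 2

/-!
Write the coefficient vector of each `qᵢ` as `s + k`, with `k` in the kernel of `M = M_{S,d}` and
`s` in the span of the eigenvectors with nonzero eigenvalue. Since `vᵀ M v = (1/|S|) ∑_{α ∈ S} v(α)²`,
where `v(α)` is the value at `α` of the polynomial with coefficient vector `v`, the kernel part
vanishes on `S`; so `sᵢ` agrees with `qᵢ` on `S`, and `δ ‖sᵢ‖² ≤ sᵢᵀ M sᵢ = (1/|S|) ∑_{α ∈ S} qᵢ(α)²`.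
Summing over `i` and putting `r - ∑ sᵢ²` into `p` gives the decomposition.
-/

open Module End Matrix MvPolynomial

theorem LinearMap.IsSymmetric.exists_eq_add_ker_le_inner {E : Type*} [NormedAddCommGroup E]
    [InnerProductSpace ℝ E] [FiniteDimensional ℝ E] {T : E →ₗ[ℝ] E} (hT : T.IsSymmetric)
    {δ : ℝ} (hδ : ∀ μ, HasEigenvalue T μ → μ ≠ 0 → δ ≤ μ) (x : E) :
    ∃ s k, x = s + k ∧ T k = 0 ∧ δ * inner ℝ s s ≤ inner ℝ s (T s) := by
  set b := hT.eigenvectorBasis rfl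
  set μ := hT.eigenvalues rfl
  set y := b.repr x
  have hdiag : ∀ v i, b.repr (T v) i = μ i * b.repr v i := hT.eigenvectorBasis_apply_self_apply rfl
  -- `s` and `k` keep the eigen-coordinates of `x` with nonzero, resp. zero, eigenvalue.
  refine ⟨b.repr.symm (WithLp.toLp 2 fun i => if μ i = 0 then 0 else y i),
    b.repr.symm (WithLp.toLp 2 fun i => if μ i = 0 then y i else 0), ?_, ?_, ?_⟩
  · apply b.repr.injective
    ext i
    by_cases h : μ i = 0 <;> simp [h, y]
  · apply b.repr.injective
    ext i
    by_cases h : μ i = 0 <;> simp [hdiag, h]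
  · rw [← b.repr.inner_map_map, ← b.repr.inner_map_map, PiLp.inner_apply, PiLp.inner_apply,
      Finset.mul_sum]
    refine Finset.sum_le_sum fun i _ => ?_
    by_cases h : μ i = 0
    · simp [hdiag, h]
    · simp only [hdiag, LinearIsometryEquiv.apply_symm_apply, h, if_false, RCLike.inner_apply,
        conj_trivial]
      rw [mul_assoc]
      exact mul_le_mul_of_nonneg_right (hδ _ (hT.hasEigenvalue_eigenvalues rfl i) h)
        (mul_self_nonneg _)

theorem Matrix.IsHermitian.exists_eq_add_ker_le_dotProduct {ι : Type*} [Fintype ι]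
    [DecidableEq ι] {M : Matrix ι ι ℝ} (hM : M.IsHermitian) {δ : ℝ}
    (hδ : ∀ (μ : ℝ) (v : ι → ℝ), v ≠ 0 → M *ᵥ v = μ • v → μ ≠ 0 → δ ≤ μ) (v : ι → ℝ) :
    ∃ s k, v = s + k ∧ M *ᵥ k = 0 ∧ δ * (s ⬝ᵥ s) ≤ s ⬝ᵥ (M *ᵥ s) := by
  have hT : (toEuclideanLin M).IsSymmetric := isSymmetric_toEuclideanLin_iff.mpr hM
  have hδT : ∀ μ, HasEigenvalue (toEuclideanLin M) μ → μ ≠ 0 → δ ≤ μ := by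
    intro μ hμ hμ0
    obtain ⟨x, hx⟩ := hμ.exists_hasEigenvector
    refine hδ μ (WithLp.ofLp x) ?_ ?_ hμ0
    · simpa using hx.2
    · simpa using congrArg WithLp.ofLp (mem_eigenspace_iff.mp hx.1)
  obtain ⟨s, k, hsk, hk, hs⟩ := hT.exists_eq_add_ker_le_inner hδT (WithLp.toLp 2 v)
  refine ⟨WithLp.ofLp s, WithLp.ofLp k, by simpa using congrArg WithLp.ofLp hsk,
    by simpa using congrArg WithLp.ofLp hk, ?_⟩
  rw [EuclideanSpace.inner_eq_star_dotProduct, EuclideanSpace.inner_eq_star_dotProduct] at hs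
  simpa [dotProduct_comm (M *ᵥ _)] using hs

namespace ExpIdx

variable {n d : ℕ}

noncomputable def toFinsupp (σ : ExpIdx n d) : Fin n →₀ ℕ :=
  Finsupp.equivFunOnFinite.symm fun i => (σ.1 i : ℕ)

theorem toFinsupp_injective : Function.Injective (toFinsupp (n := n) (d := d)) := by
  intro σ τ h
  ext i
  exact DFunLike.congr_fun h i

theorem degree_toFinsupp_le (σ : ExpIdx n d) : (σ.toFinsupp.sum fun _ e => e) ≤ d := by
  rw [Finsupp.sum_fintype _ _ fun _ => rfl]
  exact σ.2

theorem exists_toFinsupp_eq {m : Fin n →₀ ℕ} (hm : (m.sum fun _ e => e) ≤ d) :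
    ∃ σ : ExpIdx n d, σ.toFinsupp = m := by
  rw [Finsupp.sum_fintype _ _ fun _ => rfl] at hm
  have hle : ∀ i, m i < d + 1 := fun i =>
    Nat.lt_succ_of_le ((Finset.single_le_sum (fun j _ => Nat.zero_le (m j))
      (Finset.mem_univ i)).trans hm)
  exact ⟨⟨fun i => ⟨m i, hle i⟩, hm⟩, by ext i; rfl⟩

end ExpIdx

section MomentMatrix

variable {n d : ℕ}

noncomputable def monomialVector (d : ℕ) (α : Fin n → ℝ) : ExpIdx n d → ℝ :=
  fun σ => ∏ i, α i ^ (σ.1 i : ℕ)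

noncomputable def polyOfCoeffs (v : ExpIdx n d → ℝ) : MvPolynomial (Fin n) ℝ :=
  ∑ σ, monomial σ.toFinsupp (v σ)

theorem coeff_polyOfCoeffs_toFinsupp (v : ExpIdx n d → ℝ) (σ : ExpIdx n d) :
    coeff σ.toFinsupp (polyOfCoeffs v) = v σ := by
  simp [polyOfCoeffs, coeff_sum, coeff_monomial, ExpIdx.toFinsupp_injective.eq_iff]

theorem coeff_polyOfCoeffs_eq_zero (v : ExpIdx n d → ℝ) {m : Fin n →₀ ℕ}
    (hm : ∀ σ : ExpIdx n d, σ.toFinsupp ≠ m) : coeff m (polyOfCoeffs v) = 0 := by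
  simp [polyOfCoeffs, coeff_sum, coeff_monomial, hm]

theorem support_polyOfCoeffs_subset (v : ExpIdx n d → ℝ) :
    (polyOfCoeffs v).support ⊆
      Finset.univ.map ⟨ExpIdx.toFinsupp (d := d), ExpIdx.toFinsupp_injective⟩ := by
  intro m hm
  by_contra hm'
  exact mem_support_iff.mp hm (coeff_polyOfCoeffs_eq_zero v fun σ hσ => hm' (by simp [← hσ]))

theorem totalDegree_polyOfCoeffs_le (v : ExpIdx n d → ℝ) : (polyOfCoeffs v).totalDegree ≤ d :=
  totalDegree_finsetSum_le fun σ _ =>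
    (totalDegree_monomial_le _ _).trans σ.degree_toFinsupp_le

theorem polyOfCoeffs_coeff {q : MvPolynomial (Fin n) ℝ} (hq : q.totalDegree ≤ d) :
    polyOfCoeffs (fun σ : ExpIdx n d => coeff σ.toFinsupp q) = q := by
  ext m
  by_cases hm : ∃ σ : ExpIdx n d, σ.toFinsupp = m
  · obtain ⟨σ, rfl⟩ := hm
    exact coeff_polyOfCoeffs_toFinsupp _ σ
  · have hq0 : m ∉ q.support := fun hmq =>
      hm (ExpIdx.exists_toFinsupp_eq ((le_totalDegree hmq).trans hq))
    rw [notMem_support_iff.mp hq0, coeff_polyOfCoeffs_eq_zero _ fun σ hσ => hm ⟨σ, hσ⟩]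

theorem coeffNormSq_polyOfCoeffs (v : ExpIdx n d → ℝ) :
    coeffNormSq (polyOfCoeffs v) = v ⬝ᵥ v := by
  rw [coeffNormSq, Finset.sum_subset (support_polyOfCoeffs_subset v)
    fun m _ hm => by rw [notMem_support_iff.mp hm, sq, mul_zero], Finset.sum_map]
  simp [coeff_polyOfCoeffs_toFinsupp, dotProduct, sq]

theorem eval_polyOfCoeffs (α : Fin n → ℝ) (v : ExpIdx n d → ℝ) :
    eval α (polyOfCoeffs v) = monomialVector d α ⬝ᵥ v := by
  simp [polyOfCoeffs, eval_monomial, dotProduct, monomialVector, Finsupp.prod_fintype,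
    ExpIdx.toFinsupp, mul_comm]

theorem momentMatrix_eq_smul_sum (S : Finset (Fin n → ℝ)) :
    momentMatrix n d S =
      (S.card : ℝ)⁻¹ • ∑ α ∈ S, vecMulVec (monomialVector d α) (monomialVector d α) := by
  ext σ τ
  simp [momentMatrix, vecMulVec_apply, monomialVector, Matrix.sum_apply, pow_add,
    Finset.prod_mul_distrib]

theorem isHermitian_momentMatrix (S : Finset (Fin n → ℝ)) : (momentMatrix n d S).IsHermitian :=
  IsHermitian.ext fun σ τ => by simp [momentMatrix, add_comm]

theorem dotProduct_momentMatrix_mulVec (S : Finset (Fin n → ℝ)) (v : ExpIdx n d → ℝ) :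
    v ⬝ᵥ momentMatrix n d S *ᵥ v = (S.card : ℝ)⁻¹ * ∑ α ∈ S, (monomialVector d α ⬝ᵥ v) ^ 2 := by
  rw [momentMatrix_eq_smul_sum, smul_mulVec, dotProduct_smul, smul_eq_mul, Matrix.sum_mulVec,
    dotProduct_sum]
  congr 1
  refine Finset.sum_congr rfl fun α _ => ?_
  rw [vecMulVec_mulVec, op_smul_eq_smul, dotProduct_smul, smul_eq_mul, dotProduct_comm v, sq]

theorem monomialVector_dotProduct_eq_zero_of_mulVec_eq_zero {S : Finset (Fin n → ℝ)}
    {k : ExpIdx n d → ℝ}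
    (hk : momentMatrix n d S *ᵥ k = 0) {α : Fin n → ℝ} (hα : α ∈ S) :
    monomialVector d α ⬝ᵥ k = 0 := by
  have h := dotProduct_momentMatrix_mulVec S k
  rw [hk, dotProduct_zero, eq_comm, mul_eq_zero, inv_eq_zero, Nat.cast_eq_zero,
    Finset.sum_eq_zero_iff_of_nonneg fun _ _ => sq_nonneg _] at h
  exact pow_eq_zero_iff two_ne_zero |>.mp <| h.resolve_left (Finset.card_ne_zero_of_mem hα) α hα

end MomentMatrix

theorem MvPolynomial.totalDegree_sum_sq_le {σ R ι : Type*} [CommSemiring R] {s : Finset ι}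
    {f : ι → MvPolynomial σ R} {d : ℕ} (hf : ∀ i ∈ s, (f i).totalDegree ≤ d) :
    (∑ i ∈ s, f i ^ 2).totalDegree ≤ 2 * d :=
  totalDegree_finsetSum_le fun i hi => (totalDegree_pow _ _).trans (Nat.mul_le_mul_left 2 (hf i hi))

theorem exists_eqOn_mul_coeffNormSq_le {n d : ℕ} {S : Finset (Fin n → ℝ)} {δ : ℝ}
    (hspec : ∀ (μ : ℝ) (v : ExpIdx n d → ℝ), v ≠ 0 →
      (momentMatrix n d S).mulVec v = μ • v → μ ≠ 0 → δ ≤ μ)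
    {q : MvPolynomial (Fin n) ℝ} (hq : q.totalDegree ≤ d) :
    ∃ s : MvPolynomial (Fin n) ℝ, s.totalDegree ≤ d ∧ (∀ α ∈ S, eval α s = eval α q) ∧
      δ * coeffNormSq s ≤ (S.card : ℝ)⁻¹ * ∑ α ∈ S, eval α q ^ 2 := by
  obtain ⟨s, k, hsk, hk, hs⟩ := (isHermitian_momentMatrix S).exists_eq_add_ker_le_dotProduct
    hspec fun σ => coeff σ.toFinsupp q
  have heval : ∀ α ∈ S, eval α (polyOfCoeffs s) = eval α q := by
    intro α hα
    rw [← polyOfCoeffs_coeff hq, eval_polyOfCoeffs, eval_polyOfCoeffs, hsk, dotProduct_add,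
      monomialVector_dotProduct_eq_zero_of_mulVec_eq_zero hk hα, add_zero]
  refine ⟨polyOfCoeffs s, totalDegree_polyOfCoeffs_le s, heval, ?_⟩
  calc δ * coeffNormSq (polyOfCoeffs s) = δ * (s ⬝ᵥ s) := by rw [coeffNormSq_polyOfCoeffs]
    _ ≤ s ⬝ᵥ momentMatrix n d S *ᵥ s := hs
    _ = (S.card : ℝ)⁻¹ * ∑ α ∈ S, eval α q ^ 2 := by
      rw [dotProduct_momentMatrix_mulVec]
      congr 1
      exact Finset.sum_congr rfl fun α hα => by rw [← heval α hα, eval_polyOfCoeffs]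

theorem statement2_general (n d : ℕ) (S : Finset (Fin n → ℝ))
    (δ : ℝ) (hδ : 0 < δ)
    (hspec : ∀ (μ : ℝ) (v : ExpIdx n d → ℝ), v ≠ 0 →
      (momentMatrix n d S).mulVec v = μ • v → μ ≠ 0 → δ ≤ μ)
    (r : MvPolynomial (Fin n) ℝ) (t₀ : ℕ) (q : Fin t₀ → MvPolynomial (Fin n) ℝ)
    (p₀ : MvPolynomial (Fin n) ℝ)
    (hq : ∀ i, (q i).totalDegree ≤ d)
    (hp₀deg : p₀.totalDegree ≤ 2 * d)
    (hp₀ : ∀ α ∈ S, MvPolynomial.eval α p₀ = 0)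
    (hr : r = (∑ i, (q i) ^ 2) + p₀) :
    ∃ (t : ℕ) (s : Fin t → MvPolynomial (Fin n) ℝ) (p : MvPolynomial (Fin n) ℝ),
      (∀ i, (s i).totalDegree ≤ d) ∧
      p.totalDegree ≤ 2 * d ∧
      (∀ α ∈ S, MvPolynomial.eval α p = 0) ∧
      r = (∑ i, (s i) ^ 2) + p ∧
      ∑ i, coeffNormSq (s i) ≤
        (1 / δ) * (1 / (S.card : ℝ)) * ∑ α ∈ S, MvPolynomial.eval α r := by
  choose s hs_deg hs_eval hs_norm using fun i => exists_eqOn_mul_coeffNormSq_le hspec (hq i)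
  have hr_deg : r.totalDegree ≤ 2 * d := hr ▸ (totalDegree_add _ _).trans
    (max_le (totalDegree_sum_sq_le fun i _ => hq i) hp₀deg)
  have hr_eval : ∀ α ∈ S, eval α r = ∑ i, eval α (q i) ^ 2 := by
    intro α hα
    simp [hr, hp₀ α hα]
  refine ⟨t₀, s, r - ∑ i, s i ^ 2, hs_deg, ?_, ?_, by ring, ?_⟩
  · exact (totalDegree_sub _ _).trans (max_le hr_deg (totalDegree_sum_sq_le fun i _ => hs_deg i))
  · intro α hα
    simp [hr_eval α hα, hs_eval _ α hα]
  · calc ∑ i, coeffNormSq (s i)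
        ≤ ∑ i, 1 / δ * ((S.card : ℝ)⁻¹ * ∑ α ∈ S, eval α (q i) ^ 2) :=
          Finset.sum_le_sum fun i _ => by rw [one_div_mul_eq_div, le_div_iff₀' hδ]; exact hs_norm i
      _ = 1 / δ * (1 / (S.card : ℝ)) * ∑ α ∈ S, eval α r := by
          rw [Finset.sum_congr rfl hr_eval, Finset.sum_comm, ← Finset.mul_sum, ← Finset.mul_sum,
            one_div (S.card : ℝ), mul_assoc]

theorem statement2 (n d : ℕ) (S : Finset (Fin n → ℝ)) (hS : S.Nonempty)
    (δ : ℝ) (hδ : 0 < δ)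
    (hspec : ∀ (μ : ℝ) (v : ExpIdx n d → ℝ), v ≠ 0 →
      (momentMatrix n d S).mulVec v = μ • v → μ ≠ 0 → δ ≤ μ)
    (r : MvPolynomial (Fin n) ℝ) (t₀ : ℕ) (q : Fin t₀ → MvPolynomial (Fin n) ℝ)
    (p₀ : MvPolynomial (Fin n) ℝ)
    (hq : ∀ i, (q i).totalDegree ≤ d)
    (hp₀deg : p₀.totalDegree ≤ 2 * d)
    (hp₀ : ∀ α ∈ S, MvPolynomial.eval α p₀ = 0)
    (hr : r = (∑ i, (q i) ^ 2) + p₀) :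
    ∃ (t : ℕ) (s : Fin t → MvPolynomial (Fin n) ℝ) (p : MvPolynomial (Fin n) ℝ),
      (∀ i, (s i).totalDegree ≤ d) ∧
      p.totalDegree ≤ 2 * d ∧
      (∀ α ∈ S, MvPolynomial.eval α p = 0) ∧
      r = (∑ i, (s i) ^ 2) + p ∧
      ∑ i, coeffNormSq (s i) ≤
        (1 / δ) * (1 / (S.card : ℝ)) * ∑ α ∈ S, MvPolynomial.eval α r :=
  statement2_general n d S δ hδ hspec r t₀ q p₀ hq hp₀deg hp₀ hr
end

section
/- Let I be an ideal of ℝ[x₁,…,xₙ] and let p, g ∈ ℝ[x₁,…,xₙ]. Assume: (i) for every real ε > 0, both p + ε and −p + ε can be written as σ + q with σ a sum of squares and q ∈ I; and (ii) there exists a real N > 0 such that N − (g² + 1) can be written as σ + q with σ a sum of squares and q ∈ I. Then for every real ε > 0, the polynomial p·g + ε can be written as σ + q with σ a sum of squares and q ∈ I. -/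
/-!
The set `M = Σ² + I` is closed under addition and under multiplication by sums of squares, so
the identity
`2 p g + 3 δ N = (g + 1)² (p + δ) + (g² + 1) (-p + δ) + δ (g - 1)² + 3 δ (N - (g² + 1))`
puts `p g + 3 δ N / 2` in `M` as soon as `p + δ`, `-p + δ` and `N - (g² + 1)` lie in `M`.
Take `δ = 2 ε / (3 N)`.
-/

def IsSOS {n : ℕ} (σ : MvPolynomial (Fin n) ℝ) : Prop :=
  ∃ (t : ℕ) (s : Fin t → MvPolynomial (Fin n) ℝ), σ = ∑ i, (s i) ^ 2

theorem isSOS_iff_isSumSq {n : ℕ} (σ : MvPolynomial (Fin n) ℝ) : IsSOS σ ↔ IsSumSq σ := by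
  constructor
  · rintro ⟨t, s, rfl⟩
    exact IsSumSq.sum_sq _ _
  · intro h
    induction h with
    | zero => exact ⟨0, Fin.elim0, by simp⟩
    | sq_add a _ ih =>
      obtain ⟨t, s, rfl⟩ := ih
      exact ⟨t + 1, Fin.cons a s, by simp [Fin.sum_univ_succ, sq]⟩

theorem isSumSq_algebraMap {R : Type*} [CommSemiring R] [Algebra ℝ R] {c : ℝ} (hc : 0 ≤ c) :
    IsSumSq (algebraMap ℝ R c) := by
  rw [← Real.mul_self_sqrt hc, map_mul]
  exact IsSumSq.mul_self _

section SumSqAddIdeal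

variable {R : Type*} [CommRing R] (I : Ideal R)

def sumSqAddIdeal : Set R := {f | ∃ σ q, IsSumSq σ ∧ q ∈ I ∧ f = σ + q}

variable {I}

theorem IsSumSq.mem_sumSqAddIdeal {σ : R} (hσ : IsSumSq σ) : σ ∈ sumSqAddIdeal I :=
  ⟨σ, 0, hσ, I.zero_mem, (add_zero σ).symm⟩

theorem add_mem_sumSqAddIdeal {f h : R} (hf : f ∈ sumSqAddIdeal I) (hh : h ∈ sumSqAddIdeal I) :
    f + h ∈ sumSqAddIdeal I := by
  obtain ⟨σ, q, hσ, hq, rfl⟩ := hf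
  obtain ⟨τ, r, hτ, hr, rfl⟩ := hh
  exact ⟨σ + τ, q + r, hσ.add hτ, I.add_mem hq hr, by ring⟩

theorem IsSumSq.mul_mem_sumSqAddIdeal {s f : R} (hs : IsSumSq s) (hf : f ∈ sumSqAddIdeal I) :
    s * f ∈ sumSqAddIdeal I := by
  obtain ⟨σ, q, hσ, hq, rfl⟩ := hf
  exact ⟨s * σ, s * q, hs.mul hσ, I.mul_mem_left s hq, mul_add s σ q⟩

theorem mul_add_algebraMap_mem_sumSqAddIdeal [Algebra ℝ R] {p g : R} {δ N : ℝ} (hδ : 0 ≤ δ)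
    (hp₁ : p + algebraMap ℝ R δ ∈ sumSqAddIdeal I)
    (hp₂ : -p + algebraMap ℝ R δ ∈ sumSqAddIdeal I)
    (hg : algebraMap ℝ R N - (g ^ 2 + 1) ∈ sumSqAddIdeal I) :
    p * g + algebraMap ℝ R (3 * δ * N / 2) ∈ sumSqAddIdeal I := by
  set a := algebraMap ℝ R
  have hhalf : a (1 / 2) * 2 = 1 := by
    rw [← map_ofNat a 2, ← map_mul]
    norm_num
  have hconst : a (3 * δ * N / 2) = a (1 / 2) * (a (3 * δ) * a N) := by
    rw [← map_mul, ← map_mul]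
    ring_nf
  have h3δ : a (3 * δ) = 3 * a δ := by
    rw [map_mul, map_ofNat]
  have hsq (x : R) : IsSumSq (x ^ 2) := (IsSquare.sq x).isSumSq
  have hsum : (g + 1) ^ 2 * (p + a δ) + (g ^ 2 + 1) * (-p + a δ) + a δ * (g - 1) ^ 2
      + a (3 * δ) * (a N - (g ^ 2 + 1)) ∈ sumSqAddIdeal I :=
    add_mem_sumSqAddIdeal
      (add_mem_sumSqAddIdeal
        (add_mem_sumSqAddIdeal ((hsq _).mul_mem_sumSqAddIdeal hp₁)
          (((hsq g).add .one).mul_mem_sumSqAddIdeal hp₂))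
        (((isSumSq_algebraMap hδ).mul (hsq _)).mem_sumSqAddIdeal))
      ((isSumSq_algebraMap (by positivity)).mul_mem_sumSqAddIdeal hg)
  convert (isSumSq_algebraMap (by norm_num : (0 : ℝ) ≤ 1 / 2)).mul_mem_sumSqAddIdeal hsum
    using 1
  rw [hconst, h3δ]
  linear_combination (-(p * g)) * hhalf

end SumSqAddIdeal

theorem exists_isSOS_add_mem_iff_mem_sumSqAddIdeal {n : ℕ} (I : Ideal (MvPolynomial (Fin n) ℝ))
    (f : MvPolynomial (Fin n) ℝ) :
    (∃ σ q, IsSOS σ ∧ q ∈ I ∧ f = σ + q) ↔ f ∈ sumSqAddIdeal I := by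
  simp only [isSOS_iff_isSumSq]
  rfl

theorem statement3 (n : ℕ) (I : Ideal (MvPolynomial (Fin n) ℝ))
    (p g : MvPolynomial (Fin n) ℝ)
    (hp : ∀ ε : ℝ, 0 < ε →
      (∃ σ q, IsSOS σ ∧ q ∈ I ∧ p + MvPolynomial.C ε = σ + q) ∧
      (∃ σ q, IsSOS σ ∧ q ∈ I ∧ -p + MvPolynomial.C ε = σ + q))
    (hg : ∃ N : ℝ, 0 < N ∧
      ∃ σ q, IsSOS σ ∧ q ∈ I ∧ MvPolynomial.C N - (g ^ 2 + 1) = σ + q) :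
    ∀ ε : ℝ, 0 < ε →
      ∃ σ q, IsSOS σ ∧ q ∈ I ∧ p * g + MvPolynomial.C ε = σ + q := by
  obtain ⟨N, hN, hg⟩ := hg
  intro ε hε
  obtain ⟨hp₁, hp₂⟩ := hp (2 * ε / (3 * N)) (by positivity)
  rw [exists_isSOS_add_mem_iff_mem_sumSqAddIdeal, ← MvPolynomial.algebraMap_eq] at hp₁ hp₂ hg ⊢
  convert mul_add_algebraMap_mem_sumSqAddIdeal (by positivity) hp₁ hp₂ hg using 3
  field_simp
end

section
/- Let p ∈ ℝ[x₁,…,xₙ] be a polynomial. For every integer m ≥ 1 and every real ε > 0, there exist a sum of squares σ and a polynomial h such that p + ε = σ + h·pᵐ, where σ and h·pᵐ both have total degree at most 2m·(total degree of p). The same holds with p replaced by −p on the left-hand side, i.e., there exist a sum of squares σ' and a polynomial h' with −p + ε = σ' + h'·pᵐ, with the same degree bounds. -/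
lemma sq_approx (c : ℝ) : ∀ m : ℕ, 1 ≤ m → ∃ s g : Polynomial ℝ,
    s ^ 2 = 1 + Polynomial.C c * Polynomial.X + Polynomial.X ^ m * g ∧
    s.natDegree ≤ m - 1 ∧ s.coeff 0 = 1 := by
  intro m hm
  induction m with
  | zero => omega
  | succ m ih =>
    rcases Nat.eq_or_lt_of_le hm with h1 | h1
    · refine ⟨1, -Polynomial.C c, ?_, by simp, by simp⟩
      rw [← h1]; ring
    · obtain ⟨s, g, hs, hdeg, h0⟩ := ih (by omega)
      set a : ℝ := -(g.coeff 0) / 2 with ha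
      have hm0 : m ≠ 0 := by omega
      have hG : Polynomial.X ∣ (g + 2 * Polynomial.C a * s + (Polynomial.C a) ^ 2 * Polynomial.X ^ m) := by
        rw [Polynomial.X_dvd_iff]
        simp [h0, ha, Polynomial.coeff_X_pow, Ne.symm hm0]
        ring
      obtain ⟨g', hg'⟩ := hG
      refine ⟨s + Polynomial.C a * Polynomial.X ^ m, g', ?_, ?_, ?_⟩
      · calc (s + Polynomial.C a * Polynomial.X ^ m) ^ 2
            = s ^ 2 + Polynomial.X ^ m * (g + 2 * Polynomial.C a * s + (Polynomial.C a) ^ 2 * Polynomial.X ^ m)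
              - Polynomial.X ^ m * g := by ring
          _ = 1 + Polynomial.C c * Polynomial.X + Polynomial.X ^ (m + 1) * g' := by
              rw [hs, hg', pow_succ]; ring
      · refine (Polynomial.natDegree_add_le _ _).trans ?_
        have h2 : (Polynomial.C a * Polynomial.X ^ m).natDegree ≤ m :=
          (Polynomial.natDegree_C_mul_le _ _).trans (by simp)
        simp only [Nat.add_sub_cancel]
        exact max_le (hdeg.trans (by omega)) h2
      · simp [h0, Polynomial.coeff_X_pow, Ne.symm hm0]

lemma td_aeval {n : ℕ} (p : MvPolynomial (Fin n) ℝ) (q : Polynomial ℝ) :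
    (Polynomial.aeval p q).totalDegree ≤ q.natDegree * p.totalDegree := by
  rw [Polynomial.aeval_eq_sum_range]
  refine MvPolynomial.totalDegree_finsetSum_le fun i hi => ?_
  refine (MvPolynomial.totalDegree_smul_le _ _).trans ?_
  refine (MvPolynomial.totalDegree_pow _ _).trans ?_
  exact Nat.mul_le_mul_right _ (Finset.mem_range_succ_iff.mp hi)

lemma key {n : ℕ} (m : ℕ) (hm : 1 ≤ m) (p : MvPolynomial (Fin n) ℝ) (ε c : ℝ) (hε : 0 < ε) :
    ∃ σ h : MvPolynomial (Fin n) ℝ, IsSOS σ ∧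
      MvPolynomial.C (ε * c) * p + MvPolynomial.C ε = σ + h * p ^ m ∧
      σ.totalDegree ≤ 2 * m * p.totalDegree ∧
      (h * p ^ m).totalDegree ≤ 2 * m * p.totalDegree := by
  obtain ⟨s, g, hs, hdeg, -⟩ := sq_approx c m hm
  set S : MvPolynomial (Fin n) ℝ := Polynomial.aeval p s with hS
  set G : MvPolynomial (Fin n) ℝ := Polynomial.aeval p g with hGdef
  have hseval : S ^ 2 = 1 + MvPolynomial.C c * p + p ^ m * G := by
    have := congrArg (Polynomial.aeval p) hs
    simpa [MvPolynomial.algebraMap_eq] using this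
  have hsq : (MvPolynomial.C (Real.sqrt ε) : MvPolynomial (Fin n) ℝ) ^ 2 = MvPolynomial.C ε := by
    rw [← map_pow, Real.sq_sqrt hε.le]
  set σ : MvPolynomial (Fin n) ℝ := (MvPolynomial.C (Real.sqrt ε) * S) ^ 2 with hσ
  set h : MvPolynomial (Fin n) ℝ := -(MvPolynomial.C ε * G) with hh
  have heq : MvPolynomial.C (ε * c) * p + MvPolynomial.C ε = σ + h * p ^ m := by
    rw [hσ, hh, MvPolynomial.C_mul, mul_pow, hsq]
    linear_combination (-(MvPolynomial.C ε) : MvPolynomial (Fin n) ℝ) * hseval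
  have hdp : p.totalDegree ≤ 2 * m * p.totalDegree :=
    Nat.le_mul_of_pos_left _ (by omega)
  have hσd : σ.totalDegree ≤ 2 * m * p.totalDegree := by
    refine (MvPolynomial.totalDegree_pow _ _).trans ?_
    have h1 : (MvPolynomial.C (Real.sqrt ε) * S).totalDegree ≤ m * p.totalDegree := by
      refine (MvPolynomial.totalDegree_mul _ _).trans ?_
      rw [MvPolynomial.totalDegree_C, zero_add]
      exact (td_aeval p s).trans (Nat.mul_le_mul_right _ (hdeg.trans (Nat.sub_le m 1)))
    calc 2 * (MvPolynomial.C (Real.sqrt ε) * S).totalDegree ≤ 2 * (m * p.totalDegree) :=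
          Nat.mul_le_mul_left _ h1
      _ = 2 * m * p.totalDegree := by ring
  refine ⟨σ, h, ⟨1, fun _ => MvPolynomial.C (Real.sqrt ε) * S, by simp [hσ]⟩, heq, hσd, ?_⟩
  have hrw : h * p ^ m = MvPolynomial.C (ε * c) * p + MvPolynomial.C ε + (-1 : ℝ) • σ := by
    rw [neg_one_smul]
    have hCc : (MvPolynomial.C (ε * c) : MvPolynomial (Fin n) ℝ)
        = MvPolynomial.C ε * MvPolynomial.C c := map_mul _ _ _
    linear_combination -heq
  rw [hrw]
  refine (MvPolynomial.totalDegree_add _ _).trans (max_le ?_ ?_)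
  · refine (MvPolynomial.totalDegree_add _ _).trans (max_le ?_ ?_)
    · exact (MvPolynomial.totalDegree_mul _ _).trans
        (by rw [MvPolynomial.totalDegree_C, zero_add]; exact hdp)
    · simp [MvPolynomial.totalDegree_C]
  · exact (MvPolynomial.totalDegree_smul_le _ _).trans hσd

theorem statement5 (n : ℕ) (p : MvPolynomial (Fin n) ℝ)
    (m : ℕ) (hm : 1 ≤ m) (ε : ℝ) (hε : 0 < ε) :
    (∃ σ h : MvPolynomial (Fin n) ℝ, IsSOS σ ∧
      p + MvPolynomial.C ε = σ + h * p ^ m ∧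
      σ.totalDegree ≤ 2 * m * p.totalDegree ∧
      (h * p ^ m).totalDegree ≤ 2 * m * p.totalDegree) ∧
    (∃ σ' h' : MvPolynomial (Fin n) ℝ, IsSOS σ' ∧
      -p + MvPolynomial.C ε = σ' + h' * p ^ m ∧
      σ'.totalDegree ≤ 2 * m * p.totalDegree ∧
      (h' * p ^ m).totalDegree ≤ 2 * m * p.totalDegree) := by
  have hε' : ε ≠ 0 := ne_of_gt hε
  constructor
  · obtain ⟨σ, h, h1, h2, h3, h4⟩ := key m hm p ε (1 / ε) hε
    rw [mul_one_div, div_self hε', MvPolynomial.C_1, one_mul] at h2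
    exact ⟨σ, h, h1, h2, h3, h4⟩
  · obtain ⟨σ, h, h1, h2, h3, h4⟩ := key m hm p ε (-(1 / ε)) hε
    rw [mul_neg, mul_one_div, div_self hε', map_neg, MvPolynomial.C_1, neg_one_mul] at h2
    exact ⟨σ, h, h1, h2, h3, h4⟩
end

section
/- Let σ₀ ∈ ℝ[x₁,…,xₙ] be a sum of squares, let c > 0 be a real number, and set g = σ₀ + c. Then for every polynomial p ∈ ℝ[x₁,…,xₙ] and every real ε > 0 there exist a sum of squares τ and a polynomial h such that p + ε = τ + h·(p·g); and likewise there exist a sum of squares τ' and a polynomial h' such that −p + ε = τ' + h'·(p·g). -/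
open MvPolynomial

namespace IsSOS

variable {n : ℕ}

theorem sq (s : MvPolynomial (Fin n) ℝ) : IsSOS (s ^ 2) :=
  ⟨1, fun _ => s, by simp⟩

theorem add {σ τ : MvPolynomial (Fin n) ℝ} (hσ : IsSOS σ) (hτ : IsSOS τ) : IsSOS (σ + τ) := by
  obtain ⟨t, s, rfl⟩ := hσ
  obtain ⟨t', s', rfl⟩ := hτ
  exact ⟨t + t', Fin.append s s', by rw [Fin.sum_univ_add]; simp⟩

theorem sq_mul {σ : MvPolynomial (Fin n) ℝ} (hσ : IsSOS σ) (s : MvPolynomial (Fin n) ℝ) :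
    IsSOS (s ^ 2 * σ) := by
  obtain ⟨t, r, rfl⟩ := hσ
  exact ⟨t, fun i => s * r i, by rw [Finset.mul_sum]; simp only [mul_pow]⟩

theorem C_mul {σ : MvPolynomial (Fin n) ℝ} (hσ : IsSOS σ) {r : ℝ} (hr : 0 ≤ r) :
    IsSOS (C r * σ) := by
  rw [← Real.sq_sqrt hr, C_pow]
  exact hσ.sq_mul _

end IsSOS

theorem exists_isSOS_and_add_C_eq {n : ℕ} {σ₀ : MvPolynomial (Fin n) ℝ} (hσ₀ : IsSOS σ₀)
    {c ε : ℝ} (hc : 0 < c) (hε : 0 < ε) (q : MvPolynomial (Fin n) ℝ) :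
    ∃ τ, IsSOS τ ∧ q + C ε = τ + C (-1 / (4 * c * ε)) * q * (q * (σ₀ + C c)) := by
  refine ⟨C (1 / (4 * ε)) * (q + C (2 * ε)) ^ 2 + C (1 / (4 * c * ε)) * (q ^ 2 * σ₀),
    ((IsSOS.sq _).C_mul (by positivity)).add ((hσ₀.sq_mul q).C_mul (by positivity)), ?_⟩
  have hlin : 2 * C (1 / (4 * ε)) * C (2 * ε) = (1 : MvPolynomial (Fin n) ℝ) := by
    rw [← map_ofNat C 2, ← C_mul, ← C_mul, ← C_1]; congr 1; field_simp; norm_num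
  have hconst : C (1 / (4 * ε)) * C (2 * ε) ^ 2 = (C ε : MvPolynomial (Fin n) ℝ) := by
    rw [← C_pow, ← C_mul]; congr 1; field_simp; ring
  have hquad : C (1 / (4 * c * ε)) * C c = (C (1 / (4 * ε)) : MvPolynomial (Fin n) ℝ) := by
    rw [← C_mul]; congr 1; field_simp
  rw [neg_div, C_neg]
  linear_combination -(q * hlin) - hconst + q ^ 2 * hquad

theorem statement6 (n : ℕ) (σ₀ : MvPolynomial (Fin n) ℝ) (hσ₀ : IsSOS σ₀)
    (c : ℝ) (hc : 0 < c) (g : MvPolynomial (Fin n) ℝ)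
    (hg : g = σ₀ + MvPolynomial.C c)
    (p : MvPolynomial (Fin n) ℝ) (ε : ℝ) (hε : 0 < ε) :
    (∃ τ h : MvPolynomial (Fin n) ℝ, IsSOS τ ∧
      p + MvPolynomial.C ε = τ + h * (p * g)) ∧
    (∃ τ' h' : MvPolynomial (Fin n) ℝ, IsSOS τ' ∧
      -p + MvPolynomial.C ε = τ' + h' * (p * g)) := by
  subst hg
  obtain ⟨τ, hτ, hp⟩ := exists_isSOS_and_add_C_eq hσ₀ hc hε p
  obtain ⟨τ', hτ', hnp⟩ := exists_isSOS_and_add_C_eq hσ₀ hc hε (-p)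
  refine ⟨⟨τ, _, hτ, hp⟩, ⟨τ', C (-1 / (4 * c * ε)) * p, hτ', ?_⟩⟩
  rw [hnp]
  ring
end

section
/- Let k ≥ 1, let ρ₁,…,ρ_{2k} ∈ ℝ, and set a = max{2, |ρ₁|, …, |ρ_{2k}|}. Then for every real x: ∏_{i=1}^{2k}(x − ρᵢ) − x + (3a)^{2k} + 2a ≥ 0. -/
open Finset

theorem statement8 (k : ℕ) (hk : 1 ≤ k) (ρ : Fin (2 * k) → ℝ) (a : ℝ)
    (ha : a = max 2 (⨆ i, |ρ i|)) (x : ℝ) :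
    0 ≤ (∏ i, (x - ρ i)) - x + (3 * a) ^ (2 * k) + 2 * a := by
  have hρ : ∀ i, |ρ i| ≤ a := by
    intro i
    rw [ha]
    exact le_trans (le_ciSup (f := fun i => |ρ i|)
      (Set.Finite.bddAbove (Set.finite_range _)) i) (le_max_right _ _)
  have ha2 : (2:ℝ) ≤ a := ha ▸ le_max_left _ _
  have ha0 : (0:ℝ) ≤ a := by linarith
  have hpow0 : (0:ℝ) ≤ (3 * a) ^ (2 * k) := by positivity
  rcases le_or_gt x (-(2*a)) with h1 | h1
  · -- x very negative: product is nonnegative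
    have hpos : 0 ≤ ∏ i, (x - ρ i) := by
      have heq : (∏ i, (x - ρ i)) = ∏ i, -(ρ i - x) :=
        Finset.prod_congr rfl (fun i _ => by ring)
      have heq2 : (∏ i, -(ρ i - x)) = (-1:ℝ) ^ (2*k) * ∏ i, (ρ i - x) := by
        rw [show (fun i : Fin (2*k) => -(ρ i - x)) = fun i => (-1) * (ρ i - x) by
          funext i; ring]
        rw [Finset.prod_mul_distrib, Finset.prod_const]
        simp
      rw [heq, heq2, Even.neg_one_pow (even_two_mul k), one_mul]
      apply Finset.prod_nonneg
      intro i _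
      have := (abs_le.mp (hρ i)).1
      linarith
    linarith
  rcases le_or_gt x (2*a) with h2 | h2
  · -- |x| ≤ 2a
    have habs : |∏ i, (x - ρ i)| ≤ (3 * a) ^ (2 * k) := by
      rw [Finset.abs_prod]
      calc ∏ i, |x - ρ i| ≤ ∏ _i : Fin (2*k), (3 * a) := by
            apply Finset.prod_le_prod (fun i _ => abs_nonneg _)
            intro i _
            have h := abs_le.mp (hρ i)
            rw [abs_le]
            constructor <;> [linarith [h.2]; linarith [h.1]]
        _ = (3 * a) ^ (2 * k) := by
            simp [Finset.prod_const]
    have := neg_abs_le (∏ i, (x - ρ i))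
    linarith
  · -- x > 2a
    have hxa : (2:ℝ) ≤ x - a := by linarith
    have hlow : (x - a) ^ (2 * k) ≤ ∏ i, (x - ρ i) := by
      calc (x - a) ^ (2 * k) = ∏ _i : Fin (2*k), (x - a) := by
            simp [Finset.prod_const]
        _ ≤ ∏ i, (x - ρ i) := by
            apply Finset.prod_le_prod (fun i _ => by linarith)
            intro i _
            have := (abs_le.mp (hρ i)).2
            linarith
    have hsq : (x - a) ^ 2 ≤ (x - a) ^ (2 * k) :=
      pow_le_pow_right₀ (by linarith) (by omega)
    nlinarith [hpow0, hlow, hsq]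
end

section
/- Let k ≥ 1, let ρ₁,…,ρ_{2k} ∈ ℝ, and let D(X) = ∏_{i=1}^{2k}(X − ρᵢ) ∈ ℝ[X]. Then there exists a real number t with t > max{2, |ρ₁|, …, |ρ_{2k}|} and sums of squares s₁, s₂ ∈ ℝ[X] of degree at most 2k such that t − X = s₁ − D(X) and t + X = s₂ − D(X). -/
/-- A univariate polynomial is a sum of squares. -/
def IsSOSUni (p : Polynomial ℝ) : Prop :=
  ∃ (t : ℕ) (s : Fin t → Polynomial ℝ), p = ∑ i, (s i) ^ 2

/-!
A nonnegative real polynomial is a sum of two squares: at a complex root `z` it is divisible by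
`|X - z|² = (X - re z)² + (im z)²` (a real root of a nonnegative polynomial is at least double),
the quotient is again nonnegative, and products of sums of two squares are sums of two squares.
Since `D ∓ X` is monic of even degree `2k ≥ 2`, it is bounded below on `ℝ`, so `D ∓ X + t` is
nonnegative, hence a sum of squares of degree `2k`, once `t` is large.
-/

open Polynomial Filter

namespace Polynomial

lemma sq_X_sub_C_dvd_of_isRoot_of_nonneg {p : ℝ[X]} (hp : ∀ x, 0 ≤ p.eval x) {r : ℝ}
    (hr : p.IsRoot r) : (X - C r) ^ 2 ∣ p := by
  rcases eq_or_ne p 0 with rfl | hp0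
  · exact dvd_zero _
  have hmin : IsLocalMin (fun x => p.eval x) r :=
    Eventually.of_forall fun x => by simpa [hr.eq_zero] using hp x
  have hderiv : (derivative p).IsRoot r := by
    rw [IsRoot, ← Polynomial.deriv]
    exact hmin.deriv_eq_zero
  have hmult : 1 < rootMultiplicity r p :=
    (one_lt_rootMultiplicity_iff_isRoot hp0).mpr ⟨hr, hderiv⟩
  exact (pow_dvd_pow _ hmult).trans (pow_rootMultiplicity_dvd p r)

/-- The divisor is `(X - z) (X - conj z)`; for real `z` it is `(X - z) ^ 2`. -/
lemma sq_X_sub_C_add_sq_C_dvd_of_nonneg {p : ℝ[X]} (hp : ∀ x, 0 ≤ p.eval x) {z : ℂ}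
    (hz : aeval z p = 0) : (X - C z.re) ^ 2 + C z.im ^ 2 ∣ p := by
  rcases eq_or_ne z.im 0 with him | him
  · have hr : p.IsRoot z.re := by
      have hzre : z = (z.re : ℂ) := Complex.ext rfl (by simp [him])
      rw [hzre, ← Complex.coe_algebraMap, aeval_algebraMap_apply_eq_algebraMap_eval] at hz
      simpa [IsRoot] using hz
    simpa [him] using sq_X_sub_C_dvd_of_isRoot_of_nonneg hp hr
  · convert quadratic_dvd_of_aeval_eq_zero_im_ne_zero p hz him using 1
    rw [Complex.sq_norm, Complex.normSq_apply]
    simp only [C_add, C_mul, C_ofNat]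
    ring

lemma eval_nonneg_of_eval_mul_nonneg {d q : ℝ[X]} (h : ∀ x, 0 ≤ (d * q).eval x) {a : ℝ}
    (hd : ∀ x ≠ a, 0 < d.eval x) (x : ℝ) : 0 ≤ q.eval x := by
  have hoff : ∀ y ∈ ({a}ᶜ : Set ℝ), 0 ≤ q.eval y := fun y hy =>
    nonneg_of_mul_nonneg_right (by simpa using h y) (hd y hy)
  have hclosed : IsClosed {y : ℝ | 0 ≤ q.eval y} := isClosed_le continuous_const q.continuous
  exact hclosed.closure_subset_iff.mpr hoff ((dense_compl_singleton a).closure_eq ▸ trivial)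

lemma exists_eq_sq_add_sq_of_nonneg {p : ℝ[X]} (hp : ∀ x, 0 ≤ p.eval x) :
    ∃ a b : ℝ[X], p = a ^ 2 + b ^ 2 := by
  induction hn : p.natDegree using Nat.strong_induction_on generalizing p with
  | _ n ih =>
  rcases eq_or_ne n 0 with rfl | hn0
  · obtain ⟨c, rfl⟩ : ∃ c, p = C c := ⟨_, eq_C_of_natDegree_eq_zero hn⟩
    have hc : 0 ≤ c := by simpa using hp 0
    exact ⟨C √c, 0, by rw [← C_pow, Real.sq_sqrt hc]; simp⟩
  obtain ⟨z, hz⟩ := IsAlgClosed.exists_aeval_eq_zero ℂ p (by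
    rw [degree_eq_natDegree (by rintro rfl; simp_all), hn]; exact_mod_cast hn0)
  set d : ℝ[X] := (X - C z.re) ^ 2 + C z.im ^ 2 with hd
  obtain ⟨q, rfl⟩ := sq_X_sub_C_add_sq_C_dvd_of_nonneg hp hz
  have hdeval : ∀ x ≠ z.re, 0 < d.eval x := fun x hx => by
    simp only [hd, eval_add, eval_pow, eval_sub, eval_X, eval_C]
    have := sub_ne_zero.mpr hx
    positivity
  have hdeg : d.natDegree = 2 := by
    rw [hd, ← C_pow, natDegree_add_C, natDegree_pow, natDegree_X_sub_C]
  have hd0 : d ≠ 0 := ne_zero_of_natDegree_gt (hdeg ▸ two_pos)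
  have hq0 : q ≠ 0 := by rintro rfl; simp at hn; omega
  have hqdeg : q.natDegree < n := by rw [← hn, natDegree_mul hd0 hq0, hdeg]; omega
  obtain ⟨a, b, rfl⟩ := ih q.natDegree hqdeg (eval_nonneg_of_eval_mul_nonneg hp hdeval) rfl
  exact ⟨_, _, sq_add_sq_mul_sq_add_sq⟩

lemma tendsto_eval_cocompact_atTop {p : ℝ[X]} (hlc : 0 < p.leadingCoeff)
    (heven : Even p.natDegree) (hdeg : p.natDegree ≠ 0) :
    Tendsto (fun x => p.eval x) (cocompact ℝ) atTop := by
  have hpos : 0 < p.degree := natDegree_pos_iff_degree_pos.mp (Nat.pos_of_ne_zero hdeg)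
  rw [cocompact_eq_atBot_atTop, tendsto_sup]
  refine ⟨?_, tendsto_atTop_of_leadingCoeff_nonneg p hpos hlc.le⟩
  have hlc' : (p.comp (-X)).leadingCoeff = p.leadingCoeff := by
    rw [leadingCoeff_comp (by simp)]
    simp [heven.neg_one_pow]
  have hneg := tendsto_atTop_of_leadingCoeff_nonneg (p.comp (-X))
    (by rwa [degree_comp (by simp), degree_neg, degree_X, mul_one]) (hlc' ▸ hlc.le)
  simpa [Function.comp_def] using hneg.comp tendsto_neg_atBot_atTop

lemma exists_forall_le_eval {p : ℝ[X]} (hlc : 0 < p.leadingCoeff) (heven : Even p.natDegree) :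
    ∃ m, ∀ x, m ≤ p.eval x := by
  rcases eq_or_ne p.natDegree 0 with hdeg | hdeg
  · exact ⟨p.coeff 0, fun x => by rw [eq_C_of_natDegree_eq_zero hdeg]; simp⟩
  obtain ⟨x₀, hx₀⟩ := p.continuous.exists_forall_le (tendsto_eval_cocompact_atTop hlc heven hdeg)
  exact ⟨_, hx₀⟩

lemma exists_forall_le_eval_add {p q : ℝ[X]} (hlc : 0 < p.leadingCoeff) (heven : Even p.natDegree)
    (hq : q.natDegree < p.natDegree) : ∃ m, ∀ x, m ≤ (p + q).eval x :=
  exists_forall_le_eval (leadingCoeff_add_of_degree_lt' (degree_lt_degree hq) ▸ hlc)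
    (natDegree_add_eq_left_of_natDegree_lt hq ▸ heven)

end Polynomial

open Polynomial in
lemma isSOSUni_of_nonneg {p : ℝ[X]} (hp : ∀ x, 0 ≤ p.eval x) : IsSOSUni p := by
  obtain ⟨a, b, rfl⟩ := exists_eq_sq_add_sq_of_nonneg hp
  exact ⟨2, ![a, b], by simp [Fin.sum_univ_two]⟩

theorem statement9 (k : ℕ) (hk : 1 ≤ k) (ρ : Fin (2 * k) → ℝ) :
    ∃ t : ℝ, max 2 (⨆ i, |ρ i|) < t ∧
      ∃ s₁ s₂ : Polynomial ℝ, IsSOSUni s₁ ∧ IsSOSUni s₂ ∧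
        s₁.natDegree ≤ 2 * k ∧ s₂.natDegree ≤ 2 * k ∧
        Polynomial.C t - Polynomial.X =
          s₁ - ∏ i, (Polynomial.X - Polynomial.C (ρ i)) ∧
        Polynomial.C t + Polynomial.X =
          s₂ - ∏ i, (Polynomial.X - Polynomial.C (ρ i)) := by
  set D : ℝ[X] := ∏ i, (X - C (ρ i))
  have hDdeg : D.natDegree = 2 * k := by
    simp [D, natDegree_prod_of_monic _ _ fun i _ => monic_X_sub_C (ρ i)]
  have hDlc : 0 < D.leadingCoeff := (monic_prod_X_sub_C ρ _).leadingCoeff ▸ one_pos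
  have hDeven : Even D.natDegree := ⟨k, by omega⟩
  have hX : (X : ℝ[X]).natDegree < D.natDegree := by rw [natDegree_X]; omega
  obtain ⟨m₁, hm₁⟩ := exists_forall_le_eval_add hDlc hDeven (q := -X) (by rwa [natDegree_neg])
  obtain ⟨m₂, hm₂⟩ := exists_forall_le_eval_add hDlc hDeven hX
  set M := max (max 2 (⨆ i, |ρ i|)) (max (-m₁) (-m₂))
  have hM₁ : -m₁ ≤ M := le_max_of_le_right (le_max_left _ _)
  have hM₂ : -m₂ ≤ M := le_max_of_le_right (le_max_right _ _)
  refine ⟨M + 1, by linarith [le_max_left (max 2 (⨆ i, |ρ i|)) (max (-m₁) (-m₂))],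
    D + -X + C (M + 1), D + X + C (M + 1), isSOSUni_of_nonneg fun x => ?_,
    isSOSUni_of_nonneg fun x => ?_, ?_, ?_, by ring, by ring⟩
  · rw [eval_add, eval_C]; linarith [hm₁ x]
  · rw [eval_add, eval_C]; linarith [hm₂ x]
  · rw [natDegree_add_C, natDegree_add_eq_left_of_natDegree_lt (by rwa [natDegree_neg]), hDdeg]
  · rw [natDegree_add_C, natDegree_add_eq_left_of_natDegree_lt hX, hDdeg]
end

section
/- Let k ≥ 1, let ρ₁,…,ρ_{2k} ∈ ℝ, and let t ∈ ℝ satisfy t ≥ 2 and t ≥ |ρᵢ| for all i. Then for every real x: 4·∏_{i=1}^{2k}(x − ρᵢ) − (x − t)² + 4·(4t)^{2k} + 16t² ≥ 0. -/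
open Finset

theorem statement10 (k : ℕ) (hk : 1 ≤ k) (ρ : Fin (2 * k) → ℝ) (t : ℝ)
    (ht2 : 2 ≤ t) (htρ : ∀ i, |ρ i| ≤ t) (x : ℝ) :
    0 ≤ 4 * (∏ i, (x - ρ i)) - (x - t) ^ 2 + 4 * (4 * t) ^ (2 * k) + 16 * t ^ 2 := by
  have h2k : 2 ≤ 2 * k := by omega
  have ht0 : (0:ℝ) < t := by linarith
  rcases le_or_gt (|x|) (3 * t) with hx | hx
  · -- |x| ≤ 3t
    have hprod_abs : |∏ i, (x - ρ i)| ≤ (4 * t) ^ (2 * k) := by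
      rw [abs_prod]
      calc ∏ i, |x - ρ i| ≤ ∏ _i : Fin (2*k), (4 * t) := by
            apply Finset.prod_le_prod (fun i _ => abs_nonneg _)
            intro i _
            calc |x - ρ i| ≤ |x| + |ρ i| := abs_sub x (ρ i)
              _ ≤ 3*t + t := by linarith [htρ i]
              _ = 4 * t := by ring
        _ = (4*t)^(2*k) := by simp [Finset.prod_const, Finset.card_univ]
    have h1 : -((4*t)^(2*k)) ≤ ∏ i, (x - ρ i) := neg_le_of_abs_le hprod_abs
    have h2 : (x - t)^2 ≤ 16 * t^2 := by
      have hxx : -(3*t) ≤ x ∧ x ≤ 3*t := abs_le.mp hx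
      nlinarith [hxx.1, hxx.2]
    nlinarith [h1, h2]
  · -- |x| > 3t
    have key : (|x| - t)^(2*k) ≤ ∏ i, (x - ρ i) := by
      rcases abs_cases x with ⟨hxe, _⟩ | ⟨hxe, _⟩
      · calc (|x|-t)^(2*k) = ∏ _i : Fin (2*k), (|x| - t) := by
              simp [Finset.prod_const, Finset.card_univ]
          _ ≤ ∏ i, (x - ρ i) := by
              apply Finset.prod_le_prod
              · intro i _; linarith
              · intro i _; have := (abs_le.mp (htρ i)).2; rw [hxe]; linarith
      · have hrw : ∏ i, (x - ρ i) = ∏ i, (ρ i - x) := by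
          have : ∏ i, (x - ρ i) = ∏ i, ((-1) * (ρ i - x)) := by
            apply Finset.prod_congr rfl; intro i _; ring
          rw [this, Finset.prod_mul_distrib, Finset.prod_const,
            Finset.card_univ, Fintype.card_fin]
          have : ((-1:ℝ)) ^ (2*k) = 1 := Even.neg_one_pow ⟨k, by ring⟩
          rw [this, one_mul]
        rw [hrw]
        calc (|x|-t)^(2*k) = ∏ _i : Fin (2*k), (|x| - t) := by
              simp [Finset.prod_const, Finset.card_univ]
          _ ≤ ∏ i, (ρ i - x) := by
              apply Finset.prod_le_prod
              · intro i _; linarith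
              · intro i _; have := (abs_le.mp (htρ i)).1; rw [hxe]; linarith
    have hbase : (1:ℝ) ≤ |x| - t := by linarith
    have hk2 : (|x| - t)^2 ≤ (|x| - t)^(2*k) := pow_le_pow_right₀ hbase h2k
    have hp : (0:ℝ) ≤ (4*t)^(2*k) := by positivity
    have hneg : -|x| * t ≤ x * t :=
      mul_le_mul_of_nonneg_right (neg_abs_le x) ht0.le
    nlinarith [key, hk2, sq_abs x, mul_nonneg (by linarith : (0:ℝ) ≤ 3*|x| - t)
      (by linarith : (0:ℝ) ≤ |x| - 3*t), hneg, hp]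
end

section
/- Fix n ≥ 1, k ≥ 1, reals ρ₁,…,ρ_{2k}, and polynomials f₁,…,f_m ∈ ℝ[x₁,…,xₙ]. Suppose a polynomial r has a PC derivation of degree d from {f₁,…,f_m} with domain polynomials dom₁,…,domₙ. Then there exist nonnegative reals a₁,…,a_m (with aᵢ = 0 whenever fᵢ has total degree greater than d), a sum of squares σ in which each square is the square of a polynomial of total degree at most d+k−1, and polynomials q₁,…,qₙ with each product qⱼ·domⱼ of total degree at most 2(d+k−1), such that ∑_{i=1}^{m} aᵢ·fᵢ² = r² + σ + ∑_{j=1}^{n} qⱼ·domⱼ. -/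
open MvPolynomial

/-- The domain polynomial of the variable `xⱼ`: `∏_{i=1}^{2k} (xⱼ - ρᵢ)`. -/
noncomputable def domPoly (n k : ℕ) (ρ : Fin (2 * k) → ℝ) (j : Fin n) :
    MvPolynomial (Fin n) ℝ :=
  ∏ i, (X j - C (ρ i))

/-- A Polynomial Calculus (PC) derivation of degree `d` from the axioms `f i`
with domain polynomials `domPoly n k ρ j`: every derived polynomial has total
degree at most `d`, and the derivation rules are: an axiom `f i`; a domain
polynomial; a real linear combination of two previously derived polynomials;
or a previously derived polynomial multiplied by a variable. -/
inductive PCDeriv {n k m : ℕ} (ρ : Fin (2 * k) → ℝ)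
    (f : Fin m → MvPolynomial (Fin n) ℝ) (d : ℕ) :
    MvPolynomial (Fin n) ℝ → Prop
  | axm (i : Fin m) (h : (f i).totalDegree ≤ d) : PCDeriv ρ f d (f i)
  | dom (j : Fin n) (h : (domPoly n k ρ j).totalDegree ≤ d) :
      PCDeriv ρ f d (domPoly n k ρ j)
  | lin (a b : ℝ) (p q : MvPolynomial (Fin n) ℝ) (hp : PCDeriv ρ f d p)
      (hq : PCDeriv ρ f d q) (h : (C a * p + C b * q).totalDegree ≤ d) :
      PCDeriv ρ f d (C a * p + C b * q)
  | mul (j : Fin n) (p : MvPolynomial (Fin n) ℝ) (hp : PCDeriv ρ f d p)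
      (h : (X j * p).totalDegree ≤ d) : PCDeriv ρ f d (X j * p)

/-!
Induction on the derivation, with the invariant that `r²` is bounded by a nonnegative
combination `∑ aᵢ fᵢ²` of squared axioms of degree `≤ d`, modulo sums of squares of degree
`≤ D := d + k - 1` and multiples `cⱼ domⱼ` of degree `≤ 2D`. Axioms are immediate, and a domain
polynomial satisfies `domⱼ² + (-domⱼ) domⱼ = 0`. A linear combination is handled by
`(x + y)² + (x - y)² = 2x² + 2y²`. For multiplication by a variable, `M + 2 domⱼ - xⱼ²` is a
univariate polynomial of even degree `2k` with positive leading coefficient (the factor `2`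
matters when `k = 1`), hence nonnegative for large `M`, hence a sum of squares of degree `≤ k`;
multiplying by `p²` bounds `(xⱼ p)²` by `M p²` up to squares and a multiple of `domⱼ`.
A nonnegative univariate polynomial `g` is a sum of squares because at a minimum point `x₀`
the polynomial `g - g(x₀)` has a double root.
-/

open Filter

namespace Polynomial

theorem exists_forall_eval_le_of_even_natDegree {p : ℝ[X]} (hev : Even p.natDegree)
    (hlc : 0 ≤ p.leadingCoeff) : ∃ x₀, ∀ x, p.eval x₀ ≤ p.eval x := by
  rcases le_or_gt p.degree 0 with hdeg | hdeg
  · exact ⟨0, fun x => by rw [eq_C_of_degree_le_zero hdeg]; simp⟩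
  have hdeg_comp : 0 < (p.comp (-X)).degree := by
    rwa [← natDegree_pos_iff_degree_pos, natDegree_comp, natDegree_neg, natDegree_X, mul_one,
      natDegree_pos_iff_degree_pos]
  have hneg : Tendsto (fun x => (p.comp (-X)).eval x) atTop atTop :=
    (p.comp (-X)).tendsto_atTop_of_leadingCoeff_nonneg hdeg_comp
      (by simpa [hev.neg_one_pow] using hlc)
  have hcocompact : Tendsto (fun x => p.eval x) (cocompact ℝ) atTop := by
    rw [cocompact_eq_atBot_atTop, tendsto_sup]
    refine ⟨?_, p.tendsto_atTop_of_leadingCoeff_nonneg hdeg hlc⟩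
    simpa [Function.comp_def] using hneg.comp tendsto_neg_atBot_atTop
  exact p.continuous.exists_forall_le hcocompact

theorem X_sub_C_sq_dvd_sub_C_eval_of_forall_le {p : ℝ[X]} {x₀ : ℝ}
    (hmin : ∀ x, p.eval x₀ ≤ p.eval x) : (X - C x₀) ^ 2 ∣ p - C (p.eval x₀) := by
  rcases eq_or_ne (p - C (p.eval x₀)) 0 with h0 | h0
  · rw [h0]; exact dvd_zero _
  have hderiv : p.derivative.eval x₀ = 0 := by
    rw [← Polynomial.deriv]
    exact IsLocalMin.deriv_eq_zero (Eventually.of_forall hmin)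
  rw [← le_rootMultiplicity_iff h0]
  exact (one_lt_rootMultiplicity_iff_isRoot h0).mpr ⟨by simp, by simpa using hderiv⟩

theorem exists_sum_sq_of_eval_nonneg {g : ℝ[X]} (hg : ∀ x, 0 ≤ g.eval x) :
    ∃ (t : ℕ) (s : Fin t → ℝ[X]), (∀ i, 2 * (s i).natDegree ≤ g.natDegree) ∧
      g = ∑ i, s i ^ 2 := by
  induction hN : g.natDegree using Nat.strong_induction_on generalizing g with
  | _ N ih =>
  obtain ⟨x₀, hmin⟩ := g.exists_forall_norm_le
  simp only [Real.norm_eq_abs, abs_of_nonneg (hg _)] at hmin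
  obtain ⟨g₁, hg₁⟩ := X_sub_C_sq_dvd_sub_C_eval_of_forall_le hmin
  set μ := g.eval x₀
  have hμ : 0 ≤ μ := hg x₀
  have hsplit : g = C μ + (X - C x₀) ^ 2 * g₁ := by rw [← hg₁]; ring
  rcases eq_or_ne g₁ 0 with rfl | hg₁0
  · refine ⟨1, fun _ => C √μ, fun _ => by simp, ?_⟩
    rw [Fin.sum_univ_one, ← C_pow, Real.sq_sqrt hμ, hsplit, mul_zero, add_zero]
  have hdeg : N = g₁.natDegree + 2 := by
    rw [← hN, ← natDegree_sub_C (a := μ), hg₁, natDegree_mul (by simp [X_sub_C_ne_zero]) hg₁0,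
      natDegree_pow, natDegree_X_sub_C]
    ring
  have hg₁_off : {x₀}ᶜ ⊆ {x | 0 ≤ g₁.eval x} := fun x hx => by
    have hpos : 0 < (x - x₀) ^ 2 := sq_pos_of_ne_zero (sub_ne_zero.mpr hx)
    have hx := congrArg (eval x) hsplit
    simp only [eval_add, eval_C, eval_mul, eval_pow, eval_sub, eval_X] at hx
    exact (mul_nonneg_iff_of_pos_left hpos).mp (by linarith [hmin x])
  have hg₁_nonneg : ∀ x, 0 ≤ g₁.eval x := fun x =>
    (isClosed_le continuous_const g₁.continuous).closure_subset_iff.mpr hg₁_off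
      ((dense_compl_singleton x₀).closure_eq ▸ Set.mem_univ x)
  obtain ⟨t, s, hs, rfl⟩ := ih _ (by omega) hg₁_nonneg rfl
  refine ⟨t + 1, Fin.cons (C √μ) fun i => (X - C x₀) * s i, Fin.cons (by simp) fun i => ?_, ?_⟩
  · have hmul := (natDegree_mul_le (p := X - C x₀) (q := s i)).trans_eq
      (by rw [natDegree_X_sub_C])
    have := hs i
    simp only [Fin.cons_succ]
    omega
  · rw [Fin.sum_univ_succ, hsplit]
    simp [Finset.mul_sum, mul_pow, ← C_pow, Real.sq_sqrt hμ]

theorem exists_sum_sq_eq_C_add_two_mul_prod_sub_sq {k : ℕ} (hk : 1 ≤ k)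
    (ρ : Fin (2 * k) → ℝ) : ∃ M, 0 ≤ M ∧ ∃ (t : ℕ) (s : Fin t → ℝ[X]),
      (∀ i, (s i).natDegree ≤ k) ∧ C M + C 2 * ∏ i, (X - C (ρ i)) - X ^ 2 = ∑ i, s i ^ 2 := by
  set Q : ℝ[X] := ∏ i, (X - C (ρ i))
  set u : ℝ[X] := C 2 * Q - X ^ 2
  have hQ_monic : Q.Monic := monic_prod_of_monic _ _ fun i _ => monic_X_sub_C (ρ i)
  have hQ : Q.natDegree = 2 * k := by
    rw [natDegree_prod_of_monic _ _ fun i _ => monic_X_sub_C (ρ i)]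
    simp
  have hu_le : u.natDegree ≤ 2 * k :=
    (natDegree_sub_le_iff_left (by rw [natDegree_X_pow]; omega)).mpr
      ((natDegree_C_mul_le _ _).trans hQ.le)
  have hu_coeff : 0 < u.coeff (2 * k) := by
    simp only [u, coeff_sub, coeff_C_mul, ← hQ, hQ_monic.coeff_natDegree, coeff_X_pow]
    split_ifs <;> norm_num
  have hu_deg : u.natDegree = 2 * k := natDegree_eq_of_le_of_coeff_ne_zero hu_le hu_coeff.ne'
  obtain ⟨x₀, hx₀⟩ := u.exists_forall_eval_le_of_even_natDegree (hu_deg ▸ even_two_mul k)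
    (by rw [leadingCoeff, hu_deg]; exact hu_coeff.le)
  set M := max 0 (-u.eval x₀)
  have hnonneg : ∀ x, 0 ≤ (C M + u).eval x := fun x => by
    simp only [eval_add, eval_C]
    linarith [le_max_right 0 (-u.eval x₀), hx₀ x]
  have hdeg : (C M + u).natDegree ≤ 2 * k := natDegree_add_le_of_degree_le (by simp) hu_le
  obtain ⟨t, s, hs, hsum⟩ := exists_sum_sq_of_eval_nonneg hnonneg
  refine ⟨M, le_max_left _ _, t, s, fun i => by have := hs i; omega, ?_⟩
  rw [← hsum]
  ring

end Polynomial

namespace MvPolynomial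

variable {σ : Type*}

theorem totalDegree_toMvPolynomial_le {R : Type*} [CommSemiring R] (p : Polynomial R) (i : σ) :
    (p.toMvPolynomial i).totalDegree ≤ p.natDegree := by
  conv_lhs => rw [p.as_sum_range_C_mul_X_pow]
  simp only [map_sum, map_mul, map_pow, Polynomial.toMvPolynomial_C,
    Polynomial.toMvPolynomial_X, C_mul_X_pow_eq_monomial]
  refine totalDegree_finsetSum_le fun e he => (totalDegree_monomial_le _ _).trans ?_
  simpa [Finsupp.sum_single_index, Nat.lt_succ_iff] using he

theorem totalDegree_C_mul_le (a : ℝ) (p : MvPolynomial σ ℝ) :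
    (C a * p).totalDegree ≤ p.totalDegree := by
  rw [C_mul']
  exact totalDegree_smul_le a p

def IsSumSqDegLE (D : ℕ) (p : MvPolynomial σ ℝ) : Prop :=
  ∃ (t : ℕ) (s : Fin t → MvPolynomial σ ℝ), (∀ i, (s i).totalDegree ≤ D) ∧ p = ∑ i, s i ^ 2

namespace IsSumSqDegLE

variable {D : ℕ} {p q : MvPolynomial σ ℝ}

theorem zero : IsSumSqDegLE D (0 : MvPolynomial σ ℝ) :=
  ⟨0, Fin.elim0, fun i => i.elim0, by simp⟩

theorem sq (h : p.totalDegree ≤ D) : IsSumSqDegLE D (p ^ 2) :=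
  ⟨1, fun _ => p, fun _ => h, by simp⟩

theorem add (hp : IsSumSqDegLE D p) (hq : IsSumSqDegLE D q) : IsSumSqDegLE D (p + q) := by
  obtain ⟨t₁, s₁, hs₁, rfl⟩ := hp
  obtain ⟨t₂, s₂, hs₂, rfl⟩ := hq
  refine ⟨t₁ + t₂, Fin.append s₁ s₂, Fin.addCases (by simpa using hs₁) (by simpa using hs₂), ?_⟩
  simp [Fin.sum_univ_add]

theorem mul_sq {e : ℕ} (hp : IsSumSqDegLE e p) (hq : q.totalDegree + e ≤ D) :
    IsSumSqDegLE D (p * q ^ 2) := by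
  obtain ⟨t, s, hs, rfl⟩ := hp
  refine ⟨t, fun i => s i * q, fun i => (totalDegree_mul _ _).trans (by have := hs i; omega), ?_⟩
  simp [Finset.sum_mul, mul_pow]

theorem C_mul {c : ℝ} (hc : 0 ≤ c) (hp : IsSumSqDegLE D p) : IsSumSqDegLE D (C c * p) := by
  have := hp.mul_sq (D := D) (q := C √c) (by simp)
  rwa [← map_pow, Real.sq_sqrt hc, mul_comm] at this

theorem toMvPolynomial {g : Polynomial ℝ} {t : ℕ} {s : Fin t → Polynomial ℝ}
    (hs : ∀ i, (s i).natDegree ≤ D) (hg : g = ∑ i, s i ^ 2) (j : σ) :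
    IsSumSqDegLE D (g.toMvPolynomial j) :=
  ⟨t, fun i => (s i).toMvPolynomial j, fun i => (totalDegree_toMvPolynomial_le _ _).trans (hs i),
    by simp [hg]⟩

end IsSumSqDegLE

variable {ι : Type*} [Fintype ι]

def SumSqIdealLE (g : ι → MvPolynomial σ ℝ) (D : ℕ) (p q : MvPolynomial σ ℝ) : Prop :=
  ∃ (s : MvPolynomial σ ℝ) (c : ι → MvPolynomial σ ℝ), IsSumSqDegLE D s ∧
    (∀ j, (c j * g j).totalDegree ≤ 2 * D) ∧ q = p + s + ∑ j, c j * g j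

namespace SumSqIdealLE

variable {g : ι → MvPolynomial σ ℝ} {D : ℕ} {p q r p' q' s x y : MvPolynomial σ ℝ}

theorem refl (p : MvPolynomial σ ℝ) : SumSqIdealLE g D p p :=
  ⟨0, 0, .zero, by simp, by simp⟩

theorem add (h : SumSqIdealLE g D p q) (h' : SumSqIdealLE g D p' q') :
    SumSqIdealLE g D (p + p') (q + q') := by
  obtain ⟨s, c, hs, hc, rfl⟩ := h
  obtain ⟨s', c', hs', hc', rfl⟩ := h'
  refine ⟨s + s', c + c', hs.add hs', fun j => ?_, ?_⟩
  · rw [Pi.add_apply, add_mul]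
    exact (totalDegree_add _ _).trans (max_le (hc j) (hc' j))
  · simp only [Pi.add_apply, add_mul, Finset.sum_add_distrib]
    ring

theorem of_add_right (h : SumSqIdealLE g D (p + x) (q + x)) : SumSqIdealLE g D p q := by
  obtain ⟨s, c, hs, hc, heq⟩ := h
  exact ⟨s, c, hs, hc, by linear_combination heq⟩

theorem trans (h₁ : SumSqIdealLE g D p q) (h₂ : SumSqIdealLE g D q r) : SumSqIdealLE g D p r :=
  of_add_right (x := q) (by simpa only [add_comm r] using h₁.add h₂)

theorem C_mul {a : ℝ} (ha : 0 ≤ a) (h : SumSqIdealLE g D p q) :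
    SumSqIdealLE g D (C a * p) (C a * q) := by
  obtain ⟨s, c, hs, hc, rfl⟩ := h
  refine ⟨C a * s, fun j => C a * c j, hs.C_mul ha, fun j => ?_, ?_⟩
  · rw [mul_assoc]
    exact (totalDegree_C_mul_le _ _).trans (hc j)
  · simp only [Finset.mul_sum, mul_add, mul_assoc]

theorem of_isSumSqDegLE (hs : IsSumSqDegLE D s) : SumSqIdealLE g D p (p + s) :=
  ⟨s, 0, hs, by simp, by simp⟩

theorem of_mul (j : ι) {c : MvPolynomial σ ℝ} (hc : (c * g j).totalDegree ≤ 2 * D) :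
    SumSqIdealLE g D p (p + c * g j) := by
  classical
  refine ⟨0, Pi.single j c, .zero, fun j' => ?_, ?_⟩
  · rcases eq_or_ne j' j with rfl | hj
    · simpa using hc
    · simp [hj]
  · simp [Pi.single_apply]

theorem sq_le_zero (j : ι) (h : (g j).totalDegree ≤ D) : SumSqIdealLE g D (g j ^ 2) 0 := by
  have hdeg : (-g j * g j).totalDegree ≤ 2 * D := by
    grw [totalDegree_mul, totalDegree_neg, h]; omega
  convert of_mul (p := g j ^ 2) j hdeg using 1
  ring

theorem sq_add_le (h : (x - y).totalDegree ≤ D) :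
    SumSqIdealLE g D ((x + y) ^ 2) (C 2 * x ^ 2 + C 2 * y ^ 2) := by
  convert of_isSumSqDegLE (g := g) (p := (x + y) ^ 2) (IsSumSqDegLE.sq h) using 1
  simp only [map_ofNat]
  ring

theorem mul_sq_le {M : ℝ} {e : ℕ} (j : ι) (hM : IsSumSqDegLE e (C M + C 2 * g j - x ^ 2))
    (hpe : p.totalDegree + e ≤ D) (hpg : 2 * p.totalDegree + (g j).totalDegree ≤ 2 * D) :
    SumSqIdealLE g D ((x * p) ^ 2) (C M * p ^ 2) := by
  -- `C M p² = (x p)² + (C M + C 2 gⱼ - x²) p² - C 2 p² gⱼ`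
  have hdeg : (-(C 2 * p ^ 2) * g j).totalDegree ≤ 2 * D := by
    grw [totalDegree_mul, totalDegree_neg, totalDegree_C_mul_le, totalDegree_pow]
    omega
  convert (of_isSumSqDegLE (g := g) (p := (x * p) ^ 2) (hM.mul_sq hpe)).trans
    (of_mul j hdeg) using 1
  ring

end SumSqIdealLE

end MvPolynomial

section Domain

variable {n k : ℕ}

theorem domPoly_eq_toMvPolynomial (ρ : Fin (2 * k) → ℝ) (j : Fin n) :
    domPoly n k ρ j = (∏ i, (Polynomial.X - Polynomial.C (ρ i))).toMvPolynomial j := by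
  simp [domPoly, map_prod, Polynomial.toMvPolynomial_C, Polynomial.toMvPolynomial_X]

theorem totalDegree_domPoly_le (ρ : Fin (2 * k) → ℝ) (j : Fin n) :
    (domPoly n k ρ j).totalDegree ≤ 2 * k := by
  rw [domPoly_eq_toMvPolynomial]
  refine (totalDegree_toMvPolynomial_le _ _).trans_eq ?_
  rw [Polynomial.natDegree_prod_of_monic _ _ fun i _ => Polynomial.monic_X_sub_C (ρ i)]
  simp

theorem exists_isSumSqDegLE_C_add_two_mul_domPoly_sub_sq (hk : 1 ≤ k) (ρ : Fin (2 * k) → ℝ)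
    (j : Fin n) : ∃ M, 0 ≤ M ∧ IsSumSqDegLE k (C M + C 2 * domPoly n k ρ j - X j ^ 2) := by
  obtain ⟨M, hM, t, s, hs, hsum⟩ := Polynomial.exists_sum_sq_eq_C_add_two_mul_prod_sub_sq hk ρ
  refine ⟨M, hM, ?_⟩
  convert IsSumSqDegLE.toMvPolynomial hs hsum j using 1
  simp [domPoly_eq_toMvPolynomial, Polynomial.toMvPolynomial_C, Polynomial.toMvPolynomial_X]

end Domain

section Axioms

variable {σ ι κ : Type*} [Fintype ι] [Fintype κ]

def IsBoundedByAxioms (g : ι → MvPolynomial σ ℝ) (D : ℕ) (f : κ → MvPolynomial σ ℝ) (d : ℕ)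
    (h : MvPolynomial σ ℝ) : Prop :=
  ∃ a : κ → ℝ, (∀ i, 0 ≤ a i) ∧ (∀ i, d < (f i).totalDegree → a i = 0) ∧
    SumSqIdealLE g D h (∑ i, C (a i) * f i ^ 2)

namespace IsBoundedByAxioms

variable {g : ι → MvPolynomial σ ℝ} {D : ℕ} {f : κ → MvPolynomial σ ℝ} {d : ℕ}
  {h h' : MvPolynomial σ ℝ}

theorem zero : IsBoundedByAxioms g D f d 0 :=
  ⟨0, fun _ => le_rfl, fun _ _ => rfl, by simpa using SumSqIdealLE.refl 0⟩

theorem sq_of_totalDegree_le (i : κ) (hi : (f i).totalDegree ≤ d) :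
    IsBoundedByAxioms g D f d (f i ^ 2) := by
  classical
  refine ⟨Pi.single i 1, fun i' => ?_, fun i' hi' => ?_, ?_⟩
  · rcases eq_or_ne i' i with rfl | hne <;> simp [*]
  · rw [Pi.single_eq_of_ne (by rintro rfl; omega)]
  · simpa [Pi.single_apply] using SumSqIdealLE.refl (f i ^ 2)

theorem add (hh : IsBoundedByAxioms g D f d h) (hh' : IsBoundedByAxioms g D f d h') :
    IsBoundedByAxioms g D f d (h + h') := by
  obtain ⟨a, ha, had, hle⟩ := hh
  obtain ⟨a', ha', had', hle'⟩ := hh'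
  refine ⟨a + a', fun i => add_nonneg (ha i) (ha' i), fun i hi => by simp [had i hi, had' i hi],
    ?_⟩
  simpa [add_mul, Finset.sum_add_distrib] using hle.add hle'

theorem C_mul {c : ℝ} (hc : 0 ≤ c) (hh : IsBoundedByAxioms g D f d h) :
    IsBoundedByAxioms g D f d (C c * h) := by
  obtain ⟨a, ha, had, hle⟩ := hh
  refine ⟨c • a, fun i => mul_nonneg hc (ha i), fun i hi => by simp [had i hi], ?_⟩
  simpa [Finset.mul_sum, mul_assoc] using hle.C_mul hc

theorem mono (hle : SumSqIdealLE g D h' h) (hh : IsBoundedByAxioms g D f d h) :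
    IsBoundedByAxioms g D f d h' :=
  let ⟨a, ha, had, hle'⟩ := hh
  ⟨a, ha, had, hle.trans hle'⟩

end IsBoundedByAxioms

end Axioms

namespace PCDeriv

variable {n k m d : ℕ} {ρ : Fin (2 * k) → ℝ} {f : Fin m → MvPolynomial (Fin n) ℝ}
  {r : MvPolynomial (Fin n) ℝ}

theorem totalDegree_le (h : PCDeriv ρ f d r) : r.totalDegree ≤ d := by
  cases h <;> assumption

theorem isBoundedByAxioms_sq (hk : 1 ≤ k) (h : PCDeriv ρ f d r) :
    IsBoundedByAxioms (domPoly n k ρ) (d + k - 1) f d (r ^ 2) := by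
  induction h with
  | axm i hi => exact .sq_of_totalDegree_le i hi
  | dom j hj => exact IsBoundedByAxioms.zero.mono (SumSqIdealLE.sq_le_zero j (by omega))
  | lin a b p q hp hq _ ihp ihq =>
    have hdeg : (C a * p - C b * q).totalDegree ≤ d + k - 1 := by
      grw [totalDegree_sub, totalDegree_C_mul_le, totalDegree_C_mul_le, hp.totalDegree_le,
        hq.totalDegree_le]
      omega
    refine ((ihp.C_mul (c := 2 * a ^ 2) (by positivity)).add
      (ihq.C_mul (c := 2 * b ^ 2) (by positivity))).mono ?_
    convert SumSqIdealLE.sq_add_le (g := domPoly n k ρ) hdeg using 1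
    simp only [map_mul, map_pow]
    ring
  | mul j p _ hXp ih =>
    rcases eq_or_ne p 0 with rfl | hp0
    · simpa using ih
    have hdeg : p.totalDegree + 1 ≤ d := by
      simpa [totalDegree_mul_of_isDomain (X_ne_zero j) hp0, add_comm] using hXp
    obtain ⟨M, hM, hsos⟩ := exists_isSumSqDegLE_C_add_two_mul_domPoly_sub_sq hk ρ j
    exact (ih.C_mul hM).mono (SumSqIdealLE.mul_sq_le j hsos (by omega)
      (by grw [totalDegree_domPoly_le]; omega))

end PCDeriv

theorem statement11_general (n k m d : ℕ) (hk : 1 ≤ k)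
    (ρ : Fin (2 * k) → ℝ) (f : Fin m → MvPolynomial (Fin n) ℝ)
    (r : MvPolynomial (Fin n) ℝ) (hr : PCDeriv ρ f d r) :
    ∃ (a : Fin m → ℝ) (t : ℕ) (s : Fin t → MvPolynomial (Fin n) ℝ)
      (q : Fin n → MvPolynomial (Fin n) ℝ),
      (∀ i, 0 ≤ a i) ∧
      (∀ i, d < (f i).totalDegree → a i = 0) ∧
      (∀ i, (s i).totalDegree ≤ d + k - 1) ∧
      (∀ j, (q j * domPoly n k ρ j).totalDegree ≤ 2 * (d + k - 1)) ∧
      ∑ i, C (a i) * (f i) ^ 2 =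
        r ^ 2 + (∑ i, (s i) ^ 2) + ∑ j, q j * domPoly n k ρ j := by
  obtain ⟨a, ha, had, _, q, ⟨t, s, hs, rfl⟩, hq, heq⟩ := hr.isBoundedByAxioms_sq hk
  exact ⟨a, t, s, q, ha, had, hs, hq, heq⟩

theorem statement11 (n k m d : ℕ) (hn : 1 ≤ n) (hk : 1 ≤ k)
    (ρ : Fin (2 * k) → ℝ) (f : Fin m → MvPolynomial (Fin n) ℝ)
    (r : MvPolynomial (Fin n) ℝ) (hr : PCDeriv ρ f d r) :
    ∃ (a : Fin m → ℝ) (t : ℕ) (s : Fin t → MvPolynomial (Fin n) ℝ)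
      (q : Fin n → MvPolynomial (Fin n) ℝ),
      (∀ i, 0 ≤ a i) ∧
      (∀ i, d < (f i).totalDegree → a i = 0) ∧
      (∀ i, (s i).totalDegree ≤ d + k - 1) ∧
      (∀ j, (q j * domPoly n k ρ j).totalDegree ≤ 2 * (d + k - 1)) ∧
      ∑ i, C (a i) * (f i) ^ 2 =
        r ^ 2 + (∑ i, (s i) ^ 2) + ∑ j, q j * domPoly n k ρ j :=
  statement11_general n k m d hk ρ f r hr
end
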